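/- Let A ∈ M_n(ℂ). Then every X ∈ M_n(ℂ) satisfying X* A X = A is invertible (i.e. Sol_A^* is a group) if and only if ker(A) ∩ ker(A*) is trivial, i.e. the only vector v ∈ ℂⁿ with A v = 0 and A* v = 0 is v = 0. Here X* denotes the conjugate transpose of X. -/
import Mathlib


open Matrix

/-- For `A ∈ M_n(ℂ)`, `Sol_A^*` is a group (every solution of `X* A X = A` is
invertible) iff `ker(A) ∩ ker(A*)` is trivial, where `*` is conjugate transpose. -/
theorem stmt_6 (n : ℕ) (A : Matrix (Fin n) (Fin n) ℂ) :
    (∀ X : Matrix (Fin n) (Fin n) ℂ, Xᴴ * A * X = A → IsUnit X) ↔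
      (∀ v : Fin n → ℂ, A.mulVec v = 0 → Aᴴ.mulVec v = 0 → v = 0) := by
  constructor
  · intro h v hv hv'
    by_contra hvne
    set c : ℂ := star v ⬝ᵥ v with hc
    have hc0 : c ≠ 0 := by
      open scoped ComplexOrder in
      exact fun h0 => hvne (dotProduct_star_self_eq_zero.1 h0)
    set X : Matrix (Fin n) (Fin n) ℂ := 1 - c⁻¹ • vecMulVec v (star v) with hX
    have hAv : ∀ i, A i ⬝ᵥ v = 0 := fun i => congrFun hv i
    have hAv' : ∀ i, Aᴴ i ⬝ᵥ v = 0 := fun i => congrFun hv' i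
    have hAM : A * vecMulVec v (star v) = 0 := by
      ext i j
      have := hAv i
      simp only [Matrix.mul_apply, vecMulVec_apply, Matrix.zero_apply]
      rw [show (∑ x, A i x * (v x * star v j)) = (∑ x, A i x * v x) * star v j from by
        rw [Finset.sum_mul]; exact Finset.sum_congr rfl fun k _ => by ring]
      simp only [dotProduct] at this
      rw [this, zero_mul]
    have hAM' : Aᴴ * vecMulVec v (star v) = 0 := by
      ext i j
      have := hAv' i
      simp only [Matrix.mul_apply, vecMulVec_apply, Matrix.zero_apply]
      rw [show (∑ x, Aᴴ i x * (v x * star v j)) = (∑ x, Aᴴ i x * v x) * star v j from by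
        rw [Finset.sum_mul]; exact Finset.sum_congr rfl fun k _ => by ring]
      simp only [dotProduct] at this
      rw [this, zero_mul]
    have hAX : A * X = A := by
      rw [hX, Matrix.mul_sub, Matrix.mul_one, Matrix.mul_smul, hAM, smul_zero, sub_zero]
    have hAX' : Aᴴ * X = Aᴴ := by
      rw [hX, Matrix.mul_sub, Matrix.mul_one, Matrix.mul_smul, hAM', smul_zero, sub_zero]
    have hXA : Xᴴ * A = A := by
      have := congrArg conjTranspose hAX'
      simpa [Matrix.conjTranspose_mul] using this
    have hsol : Xᴴ * A * X = A := by rw [hXA, hAX]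
    have hvvm : vecMulVec v (star v) *ᵥ v = c • v := by
      ext i
      simp only [Matrix.mulVec, dotProduct, vecMulVec_apply, Pi.smul_apply, smul_eq_mul]
      rw [show (∑ x, v i * star v x * v x) = v i * ∑ x, star v x * v x from by
        rw [Finset.mul_sum]; exact Finset.sum_congr rfl fun k _ => by ring]
      have : (∑ x, star v x * v x) = c := by simp [hc, dotProduct]
      rw [this, mul_comm]
    have hXv : X.mulVec v = 0 := by
      rw [hX, Matrix.sub_mulVec, Matrix.one_mulVec, Matrix.smul_mulVec, hvvm,
        smul_smul, inv_mul_cancel₀ hc0, one_smul, sub_self]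
    have hu := h X hsol
    have hdet : X.det ≠ 0 := by
      intro h0
      exact (isUnit_iff_ne_zero.1 ((Matrix.isUnit_iff_isUnit_det X).1 hu)) h0
    have : ∃ w, w ≠ 0 ∧ X.mulVec w = 0 := ⟨v, hvne, hXv⟩
    exact hdet (Matrix.exists_mulVec_eq_zero_iff.1 this)
  · intro h X hsol
    rw [Matrix.isUnit_iff_isUnit_det, isUnit_iff_ne_zero]
    intro hdet
    obtain ⟨v, hvne, hXv⟩ := Matrix.exists_mulVec_eq_zero_iff.2 hdet
    have hsol' : Xᴴ * Aᴴ * X = Aᴴ := by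
      have := congrArg conjTranspose hsol
      simpa [Matrix.conjTranspose_mul, Matrix.mul_assoc] using this
    have h1 : A.mulVec v = 0 := by
      rw [← hsol, Matrix.mul_assoc, ← Matrix.mulVec_mulVec, ← Matrix.mulVec_mulVec, hXv]
      simp
    have h2 : Aᴴ.mulVec v = 0 := by
      rw [← hsol', ← Matrix.mulVec_mulVec, ← Matrix.mulVec_mulVec, hXv]
      simp
    exact hvne (h v h1 h2)
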